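/- Let V be finite-dimensional, R(x) ∈ End(V ⊗ V) invertible, and J ∈ GL(V) satisfying R_{12}(x) J₁ J₂ = J₁ J₂ R_{21}(x) for all x. Then the map χ_J(Y)(x) := J^{-1} Y(x) J is a bijection from solutions of the left reflection equation R_{12}(x/y) K₁(x) R_{21}(xy) K₂(y) = K₂(y) R_{12}(xy) K₁(x) R_{21}(x/y) to solutions of the right reflection equation R_{21}(x/y) K₁(x) R_{12}(xy) K₂(y) = K₂(y) R_{21}(xy) K₁(x) R_{12}(x/y). -/

import Mathlib

open Matrix Kronecker

noncomputable section

abbrev MatV (n : ℕ) := Matrix (Fin n) (Fin n) ℂ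
abbrev Sq (n : ℕ) := Matrix (Fin n × Fin n) (Fin n × Fin n) ℂ

/-- The flip operator `P` on `V ⊗ V`. -/
def flipM (n : ℕ) : Sq n := Matrix.of fun p q => if p.1 = q.2 ∧ p.2 = q.1 then (1 : ℂ) else 0

/-- `R₂₁ = P R P`. -/
def swapM {n : ℕ} (R : Sq n) : Sq n := Matrix.of fun p q => R (p.2, p.1) (q.2, q.1)

/-- Partial transpose in the first tensor factor. -/
def pt1 {n : ℕ} (R : Sq n) : Sq n := Matrix.of fun p q => R (q.1, p.2) (p.1, q.2)

/-- `R̃ = ((R^{t₁})⁻¹)^{t₁}`. -/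
def rtil {n : ℕ} (R : Sq n) : Sq n := pt1 (pt1 R)⁻¹

/-- `K ⊗ Id` acting in the first factor. -/
def k1M {n : ℕ} (K : MatV n) : Sq n := Matrix.of fun p q => if p.2 = q.2 then K p.1 q.1 else 0

/-- `Id ⊗ K` acting in the second factor. -/
def k2M {n : ℕ} (K : MatV n) : Sq n := Matrix.of fun p q => if p.1 = q.1 then K p.2 q.2 else 0

/-- Partial trace over the first tensor factor. -/
def ptr0 {n : ℕ} (X : Sq n) : MatV n := Matrix.of fun i j => ∑ a : Fin n, X (a, i) (a, j)

/-- `φ_R(Y)(x) = Tr₀ (Y₀(x) P₀₁ R₀₁(x²))`. -/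
def phiR {n : ℕ} (R : ℂ → Sq n) (K : ℂ → MatV n) : ℂ → MatV n :=
  fun x => ptr0 (k1M (K x) * flipM n * R (x ^ 2))

abbrev Cu (n : ℕ) := Matrix (Fin n × Fin n × Fin n) (Fin n × Fin n × Fin n) ℂ

def e12 {n : ℕ} (R : Sq n) : Cu n :=
  Matrix.of fun p q => if p.2.2 = q.2.2 then R (p.1, p.2.1) (q.1, q.2.1) else 0
def e13 {n : ℕ} (R : Sq n) : Cu n :=
  Matrix.of fun p q => if p.2.1 = q.2.1 then R (p.1, p.2.2) (q.1, q.2.2) else 0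
def e23 {n : ℕ} (R : Sq n) : Cu n :=
  Matrix.of fun p q => if p.1 = q.1 then R (p.2.1, p.2.2) (q.2.1, q.2.2) else 0

/-- The Yang–Baxter equation `R₁₂(x/y) R₁₃(x) R₂₃(y) = R₂₃(y) R₁₃(x) R₁₂(x/y)`. -/
def YBEprop {n : ℕ} (R : ℂ → Sq n) : Prop :=
  ∀ x y : ℂ, e12 (R (x / y)) * e13 (R x) * e23 (R y) = e23 (R y) * e13 (R x) * e12 (R (x / y))

/-- The left reflection equation. -/
def LREprop {n : ℕ} (R : ℂ → Sq n) (K : ℂ → MatV n) : Prop :=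
  ∀ x y : ℂ, R (x / y) * k1M (K x) * swapM (R (x * y)) * k2M (K y)
    = k2M (K y) * R (x * y) * k1M (K x) * swapM (R (x / y))

/-- The right reflection equation. -/
def RREprop {n : ℕ} (R : ℂ → Sq n) (K : ℂ → MatV n) : Prop :=
  ∀ x y : ℂ, swapM (R (x / y)) * k1M (K x) * R (x * y) * k2M (K y)
    = k2M (K y) * swapM (R (x * y)) * k1M (K x) * R (x / y)

/-- The dual reflection equation. -/
def DREprop {n : ℕ} (R : ℂ → Sq n) (K : ℂ → MatV n) : Prop :=
  ∀ x y : ℂ, (R (x / y))⁻¹ * k1M (K x) * swapM (rtil (R (x * y))) * k2M (K y)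
    = k2M (K y) * rtil (R (x * y)) * k1M (K x) * ((swapM (R (x / y)))⁻¹)ᵀ

/-!
Conjugation by `J ⊗ J` exchanges `R₁₂(x)` and `R₂₁(x)` and turns `K(x) ⊗ Id`, `Id ⊗ K(x)` into
`J⁻¹ K(x) J ⊗ Id`, `Id ⊗ J⁻¹ K(x) J`. Hence it carries each side of the left reflection equation
for `K` to the corresponding side of the right reflection equation for `J⁻¹ K J`, and, being
invertible, it preserves the equality of the two sides.
-/

theorem SemiconjBy.eq_iff_of_isUnit {M : Type*} [Monoid M] {a x x' y y' : M} (ha : IsUnit a)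
    (h : SemiconjBy a x y) (h' : SemiconjBy a x' y') : x = x' ↔ y = y' := by
  rw [← ha.mul_right_inj, h.eq, h'.eq, ha.mul_left_inj]

theorem SemiconjBy.kronecker {l m : Type*} [Fintype l] [Fintype m] {R : Type*} [CommSemiring R]
    {A X X' : Matrix l l R} {B Y Y' : Matrix m m R}
    (hA : SemiconjBy A X X') (hB : SemiconjBy B Y Y') :
    SemiconjBy (A ⊗ₖ B) (X ⊗ₖ Y) (X' ⊗ₖ Y') := by
  simp only [SemiconjBy, ← mul_kronecker_mul, hA.eq, hB.eq]

theorem Matrix.semiconjBy_nonsing_inv_mul_mul {m : Type*} [Fintype m] [DecidableEq m]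
    {K : Type*} [CommRing K] {J : Matrix m m K} (hJ : IsUnit J) (A : Matrix m m K) :
    SemiconjBy J (J⁻¹ * A * J) A := by
  rw [SemiconjBy, ← Matrix.mul_assoc, ← Matrix.mul_assoc,
    mul_nonsing_inv _ ((isUnit_iff_isUnit_det J).mp hJ), Matrix.one_mul]

namespace TensorSquare

variable {n : ℕ}

theorem swapM_mul (A B : Sq n) : swapM (A * B) = swapM A * swapM B := by
  ext p q
  simp only [swapM, Matrix.of_apply, Matrix.mul_apply, Fintype.sum_prod_type]
  rw [Finset.sum_comm]

theorem swapM_swapM (A : Sq n) : swapM (swapM A) = A := rfl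

theorem swapM_kronecker (A B : MatV n) : swapM (A ⊗ₖ B) = B ⊗ₖ A := by
  ext p q
  simp [swapM, kroneckerMap_apply, mul_comm]

theorem k1M_eq_kronecker (K : MatV n) : k1M K = K ⊗ₖ (1 : MatV n) := by
  ext p q
  simp [k1M, kroneckerMap_apply, Matrix.one_apply, mul_ite]

theorem k2M_eq_kronecker (K : MatV n) : k2M K = (1 : MatV n) ⊗ₖ K := by
  ext p q
  simp [k2M, kroneckerMap_apply, Matrix.one_apply, ite_mul]

theorem semiconjBy_swapM {a x y : Sq n} (h : SemiconjBy a x y) :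
    SemiconjBy (swapM a) (swapM x) (swapM y) := by
  rw [SemiconjBy, ← swapM_mul, ← swapM_mul, h.eq]

theorem semiconjBy_k1M {J : MatV n} (hJ : IsUnit J) (K : MatV n) :
    SemiconjBy (J ⊗ₖ J) (k1M (J⁻¹ * K * J)) (k1M K) := by
  rw [k1M_eq_kronecker, k1M_eq_kronecker]
  exact (semiconjBy_nonsing_inv_mul_mul hJ K).kronecker (SemiconjBy.one_right J)

theorem semiconjBy_k2M {J : MatV n} (hJ : IsUnit J) (K : MatV n) :
    SemiconjBy (J ⊗ₖ J) (k2M (J⁻¹ * K * J)) (k2M K) := by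
  rw [k2M_eq_kronecker, k2M_eq_kronecker]
  exact (SemiconjBy.one_right J).kronecker (semiconjBy_nonsing_inv_mul_mul hJ K)

end TensorSquare

open TensorSquare in
theorem stmt10_general (n : ℕ) (R : ℂ → Sq n) (J : MatV n)
    (hJ : IsUnit J)
    (hRJ : ∀ x : ℂ, R x * (J ⊗ₖ J) = (J ⊗ₖ J) * swapM (R x)) :
    ∀ K : ℂ → MatV n, LREprop R K ↔ RREprop R (fun x => J⁻¹ * K x * J) := by
  intro K
  have hR21 (x : ℂ) : SemiconjBy (J ⊗ₖ J) (swapM (R x)) (R x) := (hRJ x).symm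
  have hR12 (x : ℂ) : SemiconjBy (J ⊗ₖ J) (R x) (swapM (R x)) := by
    simpa only [swapM_kronecker, swapM_swapM] using semiconjBy_swapM (hR21 x)
  have hK1 (x : ℂ) := semiconjBy_k1M hJ (K x)
  have hK2 (x : ℂ) := semiconjBy_k2M hJ (K x)
  refine forall₂_congr fun x y =>
    (SemiconjBy.eq_iff_of_isUnit (IsUnit.kronecker hJ hJ) ?_ ?_).symm
  · exact (((hR21 (x / y)).mul_right (hK1 x)).mul_right (hR12 (x * y))).mul_right (hK2 y)
  · exact (((hK2 y).mul_right (hR21 (x * y))).mul_right (hK1 x)).mul_right (hR12 (x / y))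

/-- `χ_J` is a bijection from solutions of the LRE to solutions of the RRE. -/
theorem stmt10 (n : ℕ) (R : ℂ → Sq n) (J : MatV n)
    (hRinv : ∀ x : ℂ, IsUnit (R x))
    (hJ : IsUnit J)
    (hRJ : ∀ x : ℂ, R x * (J ⊗ₖ J) = (J ⊗ₖ J) * swapM (R x)) :
    ∀ K : ℂ → MatV n, LREprop R K ↔ RREprop R (fun x => J⁻¹ * K x * J) :=
  stmt10_general n R J hJ hRJ
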